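/- arXiv:1711.10992 — 4 statements merged into one kernel-verified Lean document; each statement's English description precedes it below -/
import Mathlib

section
/- Let (x_k) be a periodic autoregressive (PAR) process of period p with coefficients (α_k), innovations of variance σ², deterministic initial condition x_0, and Floquet multiplier λ = ∏_{k=1}^{p} α_k. Then for every n ≥ 0, the variance of the return to the starting section after n + 1 full cycles satisfies Var(x_{p + np}) = Var(x_p) · Σ_{ℓ=0}^{n} (λ²)^{ℓ}. -/
/-!
Since `x k` is a function of the constant `x 0` and `ε 1, …, ε k`, the innovation `ε (k + 1)` is
independent of `x k`, so `Var (x (k + 1)) = α (k + 1) ^ 2 * Var (x k) + σ²` with `Var (x 0) = 0`. For a solution `v` of such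
an affine recursion with `p`-periodic coefficients, restarting at a multiple of the period gives
`v (k + m p) = (∏_{j ≤ k} α j ^ 2) v (m p) + v k`; taking `k = p` yields
`v ((n + 2) p) = λ² v ((n + 1) p) + v p`, which unrolls into the geometric sum.
-/

open MeasureTheory ProbabilityTheory Finset

section AffineRecursion

variable {a v : ℕ → ℝ} {s : ℝ} {p : ℕ}

theorem affine_recursion_add_mul_period (hv0 : v 0 = 0) (hv : ∀ k, v (k + 1) = a (k + 1) * v k + s)
    (ha : Function.Periodic a p) (m k : ℕ) :
    v (k + m * p) = (∏ j ∈ Icc 1 k, a j) * v (m * p) + v k := by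
  induction k with
  | zero => simp [hv0]
  | succ k ih =>
    have ha' : a (k + m * p + 1) = a (k + 1) := by
      rw [Nat.add_right_comm]; exact ha.nat_mul m (k + 1)
    rw [Nat.add_right_comm, hv, ih, ha', hv, prod_Icc_succ_top (by omega)]
    ring

theorem affine_recursion_periods (hv0 : v 0 = 0) (hv : ∀ k, v (k + 1) = a (k + 1) * v k + s)
    (ha : Function.Periodic a p) (n : ℕ) :
    v (p + n * p) = v p * ∑ l ∈ range (n + 1), (∏ j ∈ Icc 1 p, a j) ^ l := by
  induction n with
  | zero => simp
  | succ n ih =>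
    rw [affine_recursion_add_mul_period hv0 hv ha, show (n + 1) * p = p + n * p by ring, ih,
      geom_sum_succ (n := n + 1)]
    ring

end AffineRecursion

section RandomRecursion

variable {Ω : Type*} [MeasurableSpace Ω] {μ : Measure Ω} {α : ℕ → ℝ} {ε x : ℕ → Ω → ℝ} {x0 : ℝ}

theorem memLp_two_of_recursion [IsFiniteMeasure μ] (hε : ∀ k, MemLp (ε k) 2 μ)
    (hx0 : ∀ ω, x 0 ω = x0) (hrec : ∀ k ω, x (k + 1) ω = α (k + 1) * x k ω + ε (k + 1) ω)
    (k : ℕ) : MemLp (x k) 2 μ := by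
  induction k with
  | zero => rw [funext hx0]; exact memLp_const x0
  | succ k ih => rw [funext (hrec k)]; exact (ih.const_mul _).add (hε _)

theorem stronglyAdapted_natural_of_recursion (hε : ∀ k, StronglyMeasurable (ε k))
    (hx0 : ∀ ω, x 0 ω = x0) (hrec : ∀ k ω, x (k + 1) ω = α (k + 1) * x k ω + ε (k + 1) ω) :
    StronglyAdapted (Filtration.natural ε hε) x := by
  intro k
  induction k with
  | zero => rw [funext hx0]; exact stronglyMeasurable_const
  | succ k ih =>
    rw [funext (hrec k)]
    exact ((ih.mono (Filtration.mono _ k.le_succ)).const_mul _).add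
      (Filtration.stronglyAdapted_natural hε _)

theorem indepFun_innovation_of_recursion (hε : ∀ k, StronglyMeasurable (ε k))
    (hindep : iIndepFun ε μ) (hx0 : ∀ ω, x 0 ω = x0)
    (hrec : ∀ k ω, x (k + 1) ω = α (k + 1) * x k ω + ε (k + 1) ω) (k : ℕ) :
    IndepFun (x k) (ε (k + 1)) μ := by
  rw [IndepFun_iff_Indep]
  exact indep_of_indep_of_le_left (hindep.indep_comap_natural_of_lt hε k.lt_succ_self).symm
    (stronglyAdapted_natural_of_recursion hε hx0 hrec k).measurable.comap_le

theorem variance_succ_of_recursion [IsFiniteMeasure μ] (hε : ∀ k, Measurable (ε k))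
    (hindep : iIndepFun ε μ) (hε2 : ∀ k, MemLp (ε k) 2 μ) (hx0 : ∀ ω, x 0 ω = x0)
    (hrec : ∀ k ω, x (k + 1) ω = α (k + 1) * x k ω + ε (k + 1) ω) (k : ℕ) :
    variance (x (k + 1)) μ = α (k + 1) ^ 2 * variance (x k) μ + variance (ε (k + 1)) μ := by
  have hindep_k := indepFun_innovation_of_recursion (fun k => (hε k).stronglyMeasurable)
    hindep hx0 hrec k
  rw [funext (hrec k), ← variance_const_mul]
  exact (hindep_k.comp (measurable_const_mul _) measurable_id).variance_fun_add
    ((memLp_two_of_recursion hε2 hx0 hrec k).const_mul _) (hε2 _)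

end RandomRecursion

theorem par_return_variance_cycles_general
    {Ω : Type*} [MeasurableSpace Ω] (μ : Measure Ω) [IsProbabilityMeasure μ]
    (p : ℕ)
    (α : ℕ → ℝ) (hper : ∀ k, α (k + p) = α k)
    (σ2 : ℝ)
    (ε x : ℕ → Ω → ℝ)
    (hεmeas : ∀ k, Measurable (ε k))
    (hindep : iIndepFun ε μ)
    (hvar : ∀ k, 1 ≤ k → variance (ε k) μ = σ2)
    (hεint : ∀ k, MemLp (ε k) 2 μ)
    (x0 : ℝ) (hx0 : ∀ ω, x 0 ω = x0)
    (hrec : ∀ k, 1 ≤ k → ∀ ω, x k ω = α k * x (k - 1) ω + ε k ω)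
    (n : ℕ) :
    variance (x (p + n * p)) μ
      = variance (x p) μ
        * ∑ l ∈ Finset.range (n + 1), ((∏ k ∈ Finset.Icc 1 p, α k) ^ 2) ^ l := by
  have hrec' : ∀ k ω, x (k + 1) ω = α (k + 1) * x k ω + ε (k + 1) ω :=
    fun k => hrec (k + 1) k.succ_pos
  have hv0 : variance (x 0) μ = 0 := by
    rw [funext hx0, ← variance_zero μ]
    simpa using variance_const_add (μ := μ) (X := 0) aestronglyMeasurable_zero x0
  have hv : ∀ k, variance (x (k + 1)) μ = α (k + 1) ^ 2 * variance (x k) μ + σ2 := fun k => by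
    rw [variance_succ_of_recursion hεmeas hindep hεint hx0 hrec' k, hvar (k + 1) k.succ_pos]
  have hper2 : Function.Periodic (fun k => α k ^ 2) p := fun k => by simp only [hper]
  rw [affine_recursion_periods (v := fun k => variance (x k) μ) hv0 hv hper2 n, prod_pow]

/-- **Variance of returns after several cycles of a PAR process.**
Let `(x k)` be a PAR process of period `p ≥ 1` with coefficients `α` (extended
`p`-periodically), independent innovations `ε` with mean `0` and variance `σ² > 0`,
deterministic initial condition `x 0 = x0`, and Floquet multiplier
`λ = ∏_{k=1}^p α k`.  Then for every `n ≥ 0`,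
`Var (x (p + n*p)) = Var (x p) * ∑_{ℓ=0}^n (λ²)^ℓ`. -/
theorem par_return_variance_cycles
    {Ω : Type*} [MeasurableSpace Ω] (μ : Measure Ω) [IsProbabilityMeasure μ]
    (p : ℕ) (hp : 1 ≤ p)
    (α : ℕ → ℝ) (hper : ∀ k, α (k + p) = α k)
    (σ2 : ℝ) (hσ2 : 0 < σ2)
    (ε x : ℕ → Ω → ℝ)
    (hεmeas : ∀ k, Measurable (ε k))
    (hindep : iIndepFun ε μ)
    (hmean : ∀ k, 1 ≤ k → ∫ ω, ε k ω ∂μ = 0)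
    (hvar : ∀ k, 1 ≤ k → variance (ε k) μ = σ2)
    (hεint : ∀ k, MemLp (ε k) 2 μ)
    (x0 : ℝ) (hx0 : ∀ ω, x 0 ω = x0)
    (hrec : ∀ k, 1 ≤ k → ∀ ω, x k ω = α k * x (k - 1) ω + ε k ω)
    (n : ℕ) :
    variance (x (p + n * p)) μ
      = variance (x p) μ
        * ∑ l ∈ Finset.range (n + 1), ((∏ k ∈ Finset.Icc 1 p, α k) ^ 2) ^ l :=
  par_return_variance_cycles_general μ p α hper σ2 ε x hεmeas hindep hvar hεint x0 hx0 hrec n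
end

section
/- Let (x_k) be a periodic autoregressive (PAR) process of period p with coefficients (α_k), innovations of variance σ², deterministic initial condition x_0, and Floquet multiplier λ = ∏_{k=1}^{p} α_k, and suppose |λ| < 1. Then for each k ∈ {1, …, p}, the variance of returns to section k converges: lim_{n→∞} Var(x_{(k+p) + np}) = (σ²/(1 − λ²)) · (1 + Σ_{i=2}^{p} ∏_{j=i}^{p} α_{j+k}²), where the coefficient indices are taken modulo p. In particular, the limit does not depend on the initial condition x_0. -/
open MeasureTheory ProbabilityTheory Filter Finset

/-!
Unrolling the recursion gives `x n = (∏_{0<j≤n} α j) x0 + ∑_{0<i≤n} (∏_{i<j≤n} α j) ε i`, so by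
independence `Var (x n) = σ² S n` with `S n = ∑_{0<i≤n} ∏_{i<j≤n} (α j)²`, whatever `x0` is.
Splitting this sum at `m` gives `S (m + p) = λ² S m + C m`, where, by periodicity of `α`, `C m`
depends only on `m mod p`. Along a residue class mod `p` the sequence `S` therefore obeys an affine
recurrence with ratio `λ² < 1` and converges to its fixed point `C / (1 - λ²)`.
-/

theorem Function.Periodic.prod_range_add_eq {M : Type*} [CommMonoid M] {f : ℕ → M} {p : ℕ}
    (hf : Function.Periodic f p) (m : ℕ) :
    ∏ j ∈ range p, f (m + j) = ∏ j ∈ range p, f j := by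
  induction m with
  | zero => simp
  | succ m ih =>
    rw [← ih]
    cases p with
    | zero => simp
    | succ n =>
      have hwrap : f (m + 1 + n) = f m := by rw [add_right_comm, add_assoc, hf]
      rw [prod_range_succ, prod_range_succ', hwrap, add_zero]
      simp only [add_right_comm, add_assoc]

theorem Function.Periodic.prod_Ioc_add_eq {M : Type*} [CommMonoid M] {f : ℕ → M} {p : ℕ}
    (hf : Function.Periodic f p) (m : ℕ) :
    ∏ j ∈ Ioc m (m + p), f j = ∏ j ∈ Ioc 0 p, f j := by
  have hrange : ∀ a, ∏ j ∈ Ioc a (a + p), f j = ∏ j ∈ range p, f (a + 1 + j) := fun a => by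
    rw [← Finset.Ico_add_one_add_one_eq_Ioc, prod_Ico_eq_prod_range, add_right_comm,
      Nat.add_sub_cancel_left]
  have hzero := hrange 0
  rw [zero_add, hf.prod_range_add_eq] at hzero
  rw [hrange, hf.prod_range_add_eq, hzero]

def sumTailProd {R : Type*} [CommSemiring R] (f : ℕ → R) (n : ℕ) : R :=
  ∑ i ∈ Ioc 0 n, ∏ j ∈ Ioc i n, f j

theorem sumTailProd_add {R : Type*} [CommSemiring R] (f : ℕ → R) (m p : ℕ) :
    sumTailProd f (m + p) =
      (∏ j ∈ Ioc m (m + p), f j) * sumTailProd f m + sumTailProd (fun j => f (j + m)) p := by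
  have hhead : ∀ i ∈ Ioc 0 m, ∏ j ∈ Ioc i (m + p), f j =
      (∏ j ∈ Ioc m (m + p), f j) * ∏ j ∈ Ioc i m, f j := fun i hi => by
    rw [← prod_Ioc_consecutive _ (mem_Ioc.1 hi).2 (Nat.le_add_right m p), mul_comm]
  have htail : ∑ i ∈ Ioc m (m + p), ∏ j ∈ Ioc i (m + p), f j =
      ∑ i ∈ Ioc 0 p, ∏ j ∈ Ioc i p, f (j + m) := by
    rw [add_comm m p, show Ioc m (p + m) = Ioc (0 + m) (p + m) by rw [zero_add],
      ← map_add_right_Ioc, sum_map]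
    refine sum_congr rfl fun i _ => ?_
    rw [addRightEmbedding_apply, ← map_add_right_Ioc, prod_map]
    rfl
  unfold sumTailProd
  rw [← sum_Ioc_consecutive _ (Nat.zero_le m) (Nat.le_add_right m p), sum_congr rfl hhead,
    ← mul_sum, htail]

theorem sumTailProd_eq_one_add {R : Type*} [CommSemiring R] (f : ℕ → R) {p : ℕ} (hp : 1 ≤ p) :
    sumTailProd f p = 1 + ∑ i ∈ Icc 2 p, ∏ j ∈ Icc i p, f j := by
  obtain ⟨q, rfl⟩ := Nat.exists_eq_add_of_le' hp
  rw [sumTailProd, sum_Ioc_succ_top (Nat.zero_le q), Ioc_self, prod_empty, add_comm,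
    show Icc 2 (q + 1) = (Ioc 0 q).map (addRightEmbedding 1) by
      rw [map_add_right_Ioc, zero_add, ← Icc_add_one_left_eq_Ioc]; rfl, sum_map]
  refine congrArg _ (sum_congr rfl fun i _ => ?_)
  rw [addRightEmbedding_apply, Icc_add_one_left_eq_Ioc]

theorem tendsto_of_affine_recurrence {L c : ℝ} (hL : |L| < 1) {v : ℕ → ℝ}
    (hv : ∀ n, v (n + 1) = L * v n + c) :
    Tendsto v atTop (nhds (c / (1 - L))) := by
  have hL1 : 1 - L ≠ 0 := by linarith [le_abs_self L]
  have hclosed : ∀ n, v n = c / (1 - L) + L ^ n * (v 0 - c / (1 - L)) := by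
    intro n
    induction n with
    | zero => simp
    | succ n ih =>
      rw [hv n, ih]
      field_simp
      ring
  have hlim : Tendsto (fun n => c / (1 - L) + L ^ n * (v 0 - c / (1 - L))) atTop
      (nhds (c / (1 - L) + 0 * (v 0 - c / (1 - L)))) :=
    tendsto_const_nhds.add ((tendsto_pow_atTop_nhds_zero_of_abs_lt_one hL).mul_const _)
  rw [zero_mul, add_zero] at hlim
  exact hlim.congr fun n => (hclosed n).symm

theorem Function.Periodic.tendsto_sumTailProd {f : ℕ → ℝ} {p : ℕ} (hf : Function.Periodic f p)
    (hL : |∏ j ∈ Ioc 0 p, f j| < 1) (m : ℕ) :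
    Tendsto (fun n => sumTailProd f (m + n * p)) atTop
      (nhds (sumTailProd (fun j => f (j + m)) p / (1 - ∏ j ∈ Ioc 0 p, f j))) := by
  refine tendsto_of_affine_recurrence hL fun n => ?_
  have hshift : (fun j => f (j + (m + n * p))) = fun j => f (j + m) := by
    funext j
    simpa only [Nat.cast_id, add_assoc] using hf.nat_mul n (j + m)
  rw [add_one_mul, ← add_assoc, sumTailProd_add, hf.prod_Ioc_add_eq, hshift]

theorem eq_prod_mul_add_sum_of_linear_rec {R : Type*} [CommSemiring R] {a e x : ℕ → R}
    (hx : ∀ k, x (k + 1) = a (k + 1) * x k + e (k + 1)) (n : ℕ) :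
    x n = (∏ j ∈ Ioc 0 n, a j) * x 0 + ∑ i ∈ Ioc 0 n, (∏ j ∈ Ioc i n, a j) * e i := by
  induction n with
  | zero => simp
  | succ n ih =>
    have hprod : ∀ i ∈ Ioc 0 n, (∏ j ∈ Ioc i (n + 1), a j) * e i =
        a (n + 1) * ((∏ j ∈ Ioc i n, a j) * e i) := fun i hi => by
      rw [prod_Ioc_succ_top (mem_Ioc.1 hi).2]
      ring
    rw [hx, ih, prod_Ioc_succ_top (Nat.zero_le n), sum_Ioc_succ_top (Nat.zero_le n),
      sum_congr rfl hprod, Ioc_self, prod_empty, ← mul_sum]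
    ring

theorem variance_par_eq_mul_sumTailProd {Ω : Type*} [MeasurableSpace Ω] {μ : Measure Ω}
    [IsProbabilityMeasure μ] {α : ℕ → ℝ} {σ2 : ℝ} {ε x : ℕ → Ω → ℝ} (hindep : iIndepFun ε μ)
    (hvar : ∀ k, 1 ≤ k → variance (ε k) μ = σ2) (hεint : ∀ k, MemLp (ε k) 2 μ) {x0 : ℝ}
    (hx0 : ∀ ω, x 0 ω = x0) (hrec : ∀ k ω, x (k + 1) ω = α (k + 1) * x k ω + ε (k + 1) ω)
    (n : ℕ) :
    variance (x n) μ = σ2 * sumTailProd (fun j => α j ^ 2) n := by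
  have hsol : x n = fun ω =>
      (∏ j ∈ Ioc 0 n, α j) * x0 + (∑ i ∈ Ioc 0 n, fun ω => (∏ j ∈ Ioc i n, α j) * ε i ω) ω := by
    funext ω
    rw [eq_prod_mul_add_sum_of_linear_rec (a := α) (e := fun k => ε k ω) (x := fun k => x k ω)
      (fun k => hrec k ω) n, hx0, Finset.sum_apply]
  have hmemLp : ∀ i ∈ Ioc 0 n, MemLp (fun ω => (∏ j ∈ Ioc i n, α j) * ε i ω) 2 μ :=
    fun i _ => (hεint i).const_mul _
  rw [hsol, variance_const_add (memLp_finsetSum' _ hmemLp).aestronglyMeasurable,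
    IndepFun.variance_sum hmemLp fun i _ j _ hij =>
      (hindep.indepFun hij).comp (measurable_const_mul _) (measurable_const_mul _),
    sumTailProd, mul_sum]
  refine sum_congr rfl fun i hi => ?_
  rw [variance_const_mul, hvar i (mem_Ioc.1 hi).1, prod_pow, mul_comm]

theorem par_asymptotic_return_variance_general
    {Ω : Type*} [MeasurableSpace Ω] (μ : Measure Ω) [IsProbabilityMeasure μ]
    (p : ℕ) (hp : 1 ≤ p)
    (α : ℕ → ℝ) (hper : ∀ k, α (k + p) = α k)
    (σ2 : ℝ)
    (ε x : ℕ → Ω → ℝ)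
    (hindep : iIndepFun ε μ)
    (hvar : ∀ k, 1 ≤ k → variance (ε k) μ = σ2)
    (hεint : ∀ k, MemLp (ε k) 2 μ)
    (x0 : ℝ) (hx0 : ∀ ω, x 0 ω = x0)
    (hrec : ∀ k, 1 ≤ k → ∀ ω, x k ω = α k * x (k - 1) ω + ε k ω)
    (hlam : |∏ k ∈ Finset.Icc 1 p, α k| < 1)
    (k : ℕ) :
    Tendsto (fun n : ℕ => variance (x ((k + p) + n * p)) μ) atTop
      (nhds ((σ2 / (1 - (∏ k ∈ Finset.Icc 1 p, α k) ^ 2))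
        * (1 + ∑ i ∈ Finset.Icc 2 p, ∏ j ∈ Finset.Icc i p, (α (j + k)) ^ 2))) := by
  have hvariance := variance_par_eq_mul_sumTailProd (α := α) hindep hvar hεint hx0
    fun k ω => hrec (k + 1) k.succ_pos ω
  have hflo : (∏ k ∈ Icc 1 p, α k) ^ 2 = ∏ j ∈ Ioc 0 p, α j ^ 2 := by
    rw [← prod_pow, ← Icc_add_one_left_eq_Ioc, zero_add]
  have hsq_per : Function.Periodic (fun j => α j ^ 2) p := fun j => congrArg (· ^ 2) (hper j)
  have hflo_lt : |∏ j ∈ Ioc 0 p, α j ^ 2| < 1 := by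
    rwa [← hflo, abs_of_nonneg (sq_nonneg _), sq_lt_one_iff_abs_lt_one]
  have hconst : sumTailProd (fun j => α (j + (k + p)) ^ 2) p =
      1 + ∑ i ∈ Icc 2 p, ∏ j ∈ Icc i p, α (j + k) ^ 2 := by
    simp only [← add_assoc, hper]
    exact sumTailProd_eq_one_add _ hp
  convert (hsq_per.tendsto_sumTailProd hflo_lt (k + p)).const_mul σ2 using 2 with n
  · exact hvariance _
  · rw [hflo, hconst]
    ring

/-- **Asymptotic variance of returns of a PAR process to each section.**
Let `(x k)` be a PAR process of period `p ≥ 1` with coefficients `α` (extended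
`p`-periodically, which realizes the "indices mod p" convention), independent
innovations `ε` with mean `0` and variance `σ² > 0`, deterministic initial
condition `x 0 = x0`, and Floquet multiplier `λ = ∏_{k=1}^p α k` with `|λ| < 1`.
Then for each `k ∈ {1, …, p}`, the variance of returns to section `k` converges:
`lim_{n→∞} Var (x ((k+p) + n*p)) = σ²/(1-λ²) * (1 + ∑_{i=2}^p ∏_{j=i}^p (α (j+k))²)`.
In particular the limit does not depend on the initial condition `x0`. -/
theorem par_asymptotic_return_variance
    {Ω : Type*} [MeasurableSpace Ω] (μ : Measure Ω) [IsProbabilityMeasure μ]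
    (p : ℕ) (hp : 1 ≤ p)
    (α : ℕ → ℝ) (hper : ∀ k, α (k + p) = α k)
    (σ2 : ℝ) (hσ2 : 0 < σ2)
    (ε x : ℕ → Ω → ℝ)
    (hεmeas : ∀ k, Measurable (ε k))
    (hindep : iIndepFun ε μ)
    (hmean : ∀ k, 1 ≤ k → ∫ ω, ε k ω ∂μ = 0)
    (hvar : ∀ k, 1 ≤ k → variance (ε k) μ = σ2)
    (hεint : ∀ k, MemLp (ε k) 2 μ)
    (x0 : ℝ) (hx0 : ∀ ω, x 0 ω = x0)
    (hrec : ∀ k, 1 ≤ k → ∀ ω, x k ω = α k * x (k - 1) ω + ε k ω)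
    (hlam : |∏ k ∈ Finset.Icc 1 p, α k| < 1)
    (k : ℕ) (hk : k ∈ Finset.Icc 1 p) :
    Tendsto (fun n : ℕ => variance (x ((k + p) + n * p)) μ) atTop
      (nhds ((σ2 / (1 - (∏ k ∈ Finset.Icc 1 p, α k) ^ 2))
        * (1 + ∑ i ∈ Finset.Icc 2 p, ∏ j ∈ Finset.Icc i p, (α (j + k)) ^ 2))) :=
  par_asymptotic_return_variance_general μ p hp α hper σ2 ε x hindep hvar hεint x0 hx0 hrec hlam k
end

section
/- Let (x_k) be a Gaussian PAR process of period p with coefficients (α_k), i.i.d. innovations N(0, σ²), and deterministic initial condition x_0, observed for n cycles (i.e., the sample is (x_1, …, x_{np})). Then the Fisher information matrix I(α) for the parameter vector (α_1, …, α_p), defined as the negative expected Hessian of the log joint density, is diagonal, with diagonal entries [I(α)]_{kk} = (1/σ²) Σ_{m=0}^{n-1} E[x_{k-1+mp}²]. -/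
open MeasureTheory ProbabilityTheory Filter Finset Real

/-! The log-likelihood is quadratic in each coefficient `α_k`, and its score in coordinate `k`,
`∑ (x_i - α_k x_{i-1}) x_{i-1} / σ²` over the indices `i` of season `k`, involves no other
coordinate. Hence all mixed second derivatives vanish identically, while the second derivative
in `α_k` is the deterministic-in-`α` quantity `-∑_m x_{k-1+mp}² / σ²`. Taking expectations only
needs the `x_i` to be square integrable, which follows from the recursion since Gaussian
innovations are in `L²`. -/

/-- The log joint density `ℓ(α; y)` of a Gaussian PAR sample `(y 1, …, y np)`
over `n` cycles (given `y 0`), viewed as a function of the parameter vector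
`a = (α_1, …, α_p)` (zero-based: `a i` is `α_{i+1}`). -/
noncomputable def parLogLik (p : ℕ) (hp : 0 < p) (np : ℕ) (σ2 : ℝ) (y : ℕ → ℝ)
    (a : Fin p → ℝ) : ℝ :=
  ∑ k ∈ Finset.Icc 1 np,
    (-(1 / 2) * Real.log (2 * Real.pi * σ2)
      - (y k - a ⟨(k - 1) % p, Nat.mod_lt _ hp⟩ * y (k - 1)) ^ 2 / (2 * σ2))

open Function

section LogLikelihood

variable {p : ℕ} {hp : 0 < p} {N : ℕ} {σ2 : ℝ} {y : ℕ → ℝ}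

theorem hasDerivAt_parLogLik_update (a : Fin p → ℝ) (k : Fin p) (s : ℝ) :
    HasDerivAt (fun s => parLogLik p hp N σ2 y (update a k s))
      (∑ i ∈ Icc 1 N with (i - 1) % p = k, (y i - s * y (i - 1)) * y (i - 1) / σ2) s := by
  simp only [parLogLik, sum_filter]
  refine HasDerivAt.fun_sum fun i _ => ?_
  by_cases h : (i - 1) % p = k
  · have hi : (⟨(i - 1) % p, Nat.mod_lt _ hp⟩ : Fin p) = k := Fin.ext h
    simp only [hi, update_self, if_pos h]
    have hres := ((hasDerivAt_id s).mul_const (y (i - 1))).const_sub (y i)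
    exact ((hres.fun_pow 2).div_const (2 * σ2)).const_sub _ |>.congr_deriv
      (by simp only [id]; ring)
  · have hi : (⟨(i - 1) % p, Nat.mod_lt _ hp⟩ : Fin p) ≠ k := fun h' => h (congrArg Fin.val h')
    simp only [update_of_ne hi, if_neg h]
    exact hasDerivAt_const _ _

theorem deriv_parLogLik_update (a : Fin p → ℝ) (k : Fin p) :
    deriv (fun s => parLogLik p hp N σ2 y (update a k s))
      = fun s => ∑ i ∈ Icc 1 N with (i - 1) % p = k, (y i - s * y (i - 1)) * y (i - 1) / σ2 :=
  funext fun s => (hasDerivAt_parLogLik_update a k s).deriv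

theorem deriv_deriv_parLogLik_update (a : Fin p → ℝ) (k : Fin p) (t : ℝ) :
    deriv (deriv fun s => parLogLik p hp N σ2 y (update a k s)) t
      = -(∑ i ∈ Icc 1 N with (i - 1) % p = k, y (i - 1) ^ 2) / σ2 := by
  have hscore : HasDerivAt
      (fun s => ∑ i ∈ Icc 1 N with (i - 1) % p = k, (y i - s * y (i - 1)) * y (i - 1) / σ2)
      (∑ i ∈ Icc 1 N with (i - 1) % p = k, -(y (i - 1) ^ 2 / σ2)) t :=
    HasDerivAt.fun_sum fun i _ =>
      ((((hasDerivAt_id t).mul_const _).const_sub _).mul_const _).div_const _ |>.congr_deriv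
        (by ring)
  rw [deriv_parLogLik_update, hscore.deriv, sum_neg_distrib, ← sum_div, neg_div]

theorem deriv_deriv_parLogLik_update_update (a : Fin p → ℝ) (k j : Fin p) (c t : ℝ) :
    deriv (fun t => deriv (fun s => parLogLik p hp N σ2 y (update (update a j t) k s)) c) t
      = 0 := by
  simp only [deriv_parLogLik_update]
  exact deriv_const _ _

end LogLikelihood

theorem sum_range_mul_filter_mod_eq {M : Type*} [AddCommMonoid M] (g : ℕ → M) {p j : ℕ}
    (hj : j < p) (n : ℕ) :
    ∑ i ∈ range (n * p) with i % p = j, g i = ∑ m ∈ range n, g (j + m * p) := by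
  induction n with
  | zero => simp
  | succ n ih =>
    rw [Nat.succ_mul, sum_filter, sum_range_add, ← sum_filter, ih, sum_range_succ]
    congr 1
    have hmod : ∀ i ∈ range p, (n * p + i) % p = i % p := fun i _ => by
      rw [Nat.add_comm, Nat.add_mul_mod_self_right]
    rw [sum_congr rfl fun i hi => by rw [hmod i hi, Nat.mod_eq_of_lt (mem_range.mp hi)],
      sum_ite_eq' (range p) j, if_pos (mem_range.mpr hj), Nat.add_comm]

theorem sum_Icc_mul_filter_pred_mod_eq {M : Type*} [AddCommMonoid M] (g : ℕ → M) {p j : ℕ}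
    (hj : j < p) (n : ℕ) :
    ∑ i ∈ Icc 1 (n * p) with (i - 1) % p = j, g (i - 1) = ∑ m ∈ range n, g (j + m * p) := by
  rw [← sum_range_mul_filter_mod_eq g hj, sum_filter, sum_filter, ← Ico_add_one_right_eq_Icc,
    sum_Ico_eq_sum_range]
  simp only [Nat.add_sub_cancel, Nat.add_sub_cancel_left]

theorem memLp_of_linear_recursion {Ω : Type*} [MeasurableSpace Ω] {μ : Measure Ω}
    {q : ENNReal} {c : ℕ → ℝ} {ε x : ℕ → Ω → ℝ} (hx0 : MemLp (x 0) q μ)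
    (hrec : ∀ k, 1 ≤ k → ∀ ω, x k ω = c k * x (k - 1) ω + ε k ω)
    (hε : ∀ k, 1 ≤ k → MemLp (ε k) q μ) (k : ℕ) : MemLp (x k) q μ := by
  induction k with
  | zero => exact hx0
  | succ k ih =>
    rw [funext (hrec (k + 1) k.succ_pos)]
    exact (ih.const_mul _).add (hε _ k.succ_pos)

theorem memLp_two_of_map_eq_gaussianReal {Ω : Type*} [MeasurableSpace Ω] {μ : Measure Ω}
    {X : Ω → ℝ} {m : ℝ} {v : NNReal} (hX : μ.map X = gaussianReal m v) : MemLp X 2 μ :=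
  (⟨hX ▸ inferInstance⟩ : HasGaussianLaw X μ).memLp_two

theorem gaussian_par_fisher_information_diagonal_general
    {Ω : Type*} [MeasurableSpace Ω] (μ : Measure Ω) [IsProbabilityMeasure μ]
    (p : ℕ) (hp : 0 < p) (n : ℕ)
    (α : ℕ → ℝ)
    (v : NNReal)
    (ε x : ℕ → Ω → ℝ)
    (hgauss : ∀ k, 1 ≤ k → Measure.map (ε k) μ = gaussianReal 0 v)
    (x0 : ℝ) (hx0 : ∀ ω, x 0 ω = x0)
    (hrec : ∀ k, 1 ≤ k → ∀ ω, x k ω = α k * x (k - 1) ω + ε k ω)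
    (a₀ : Fin p → ℝ) :
    (∀ k j : Fin p, k ≠ j →
      -∫ ω, deriv (fun t : ℝ =>
          deriv (fun s : ℝ =>
              parLogLik p hp (n * p) (v : ℝ) (fun i => x i ω)
                (Function.update (Function.update a₀ j t) k s)) (a₀ k)) (a₀ j) ∂μ
        = 0)
    ∧ (∀ k : Fin p,
        -∫ ω, deriv (deriv (fun s : ℝ =>
            parLogLik p hp (n * p) (v : ℝ) (fun i => x i ω)
              (Function.update a₀ k s))) (a₀ k) ∂μ
          = (1 / (v : ℝ))
              * ∑ m ∈ Finset.range n, ∫ ω, (x ((k : ℕ) + m * p) ω) ^ 2 ∂μ) := by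
  refine ⟨fun k j _ => ?_, fun k => ?_⟩
  · simp only [deriv_deriv_parLogLik_update_update, integral_zero, neg_zero]
  have hx : ∀ m, MemLp (x m) 2 μ := memLp_of_linear_recursion (funext hx0 ▸ memLp_const x0) hrec
    fun m hm => memLp_two_of_map_eq_gaussianReal (hgauss m hm)
  simp only [deriv_deriv_parLogLik_update]
  rw [integral_div, integral_neg, integral_finsetSum _ fun m _ => (hx _).integrable_sq,
    sum_Icc_mul_filter_pred_mod_eq (fun i => ∫ ω, x i ω ^ 2 ∂μ) k.isLt]
  ring

/-- **The Fisher information matrix of a Gaussian PAR process is diagonal.**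
Let `(x k)` be a Gaussian PAR process of period `p` with coefficients `α`
(extended `p`-periodically), i.i.d. innovations `ε k ~ N(0, v)`, deterministic
initial condition `x 0 = x0`, observed for `n` cycles.  The Fisher information
matrix for the parameter vector `(α_1, …, α_p)` — the negative expected Hessian
of the log joint density, evaluated at the true parameter `a₀` — is diagonal,
with diagonal entries `[I(α)]_kk = (1/σ²) ∑_{m=0}^{n-1} E[x_{k-1+mp}²]`
(zero-based: the entry for coordinate `k` is `(1/σ²) ∑_{m<n} E[(x (k + m*p))²]`). -/
theorem gaussian_par_fisher_information_diagonal
    {Ω : Type*} [MeasurableSpace Ω] (μ : Measure Ω) [IsProbabilityMeasure μ]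
    (p : ℕ) (hp : 0 < p) (n : ℕ) (hn : 0 < n)
    (α : ℕ → ℝ) (hper : ∀ k, α (k + p) = α k)
    (v : NNReal) (hv : 0 < v)
    (ε x : ℕ → Ω → ℝ)
    (hεmeas : ∀ k, Measurable (ε k))
    (hindep : iIndepFun ε μ)
    (hgauss : ∀ k, 1 ≤ k → Measure.map (ε k) μ = gaussianReal 0 v)
    (x0 : ℝ) (hx0 : ∀ ω, x 0 ω = x0)
    (hrec : ∀ k, 1 ≤ k → ∀ ω, x k ω = α k * x (k - 1) ω + ε k ω)
    (a₀ : Fin p → ℝ) (ha₀ : ∀ i : Fin p, a₀ i = α ((i : ℕ) + 1)) :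
    (∀ k j : Fin p, k ≠ j →
      -∫ ω, deriv (fun t : ℝ =>
          deriv (fun s : ℝ =>
              parLogLik p hp (n * p) (v : ℝ) (fun i => x i ω)
                (Function.update (Function.update a₀ j t) k s)) (a₀ k)) (a₀ j) ∂μ
        = 0)
    ∧ (∀ k : Fin p,
        -∫ ω, deriv (deriv (fun s : ℝ =>
            parLogLik p hp (n * p) (v : ℝ) (fun i => x i ω)
              (Function.update a₀ k s))) (a₀ k) ∂μ
          = (1 / (v : ℝ))
              * ∑ m ∈ Finset.range n, ∫ ω, (x ((k : ℕ) + m * p) ω) ^ 2 ∂μ) :=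
  gaussian_par_fisher_information_diagonal_general μ p hp n α v ε x hgauss x0 hx0 hrec a₀
end

section
/- Let τ > 0 and let φ : ℝ → ℝ be continuous with φ(t) ≠ 0 for all t. Then the Riemann-type double sums converge to the corresponding double integral in the continuum limit of equally spaced sections: lim_{p→∞} (τ/p) Σ_{k=1}^{p} [ (τ/p) Σ_{i=1}^{p} (φ(kτ/p + τ)/φ((i+k)τ/p))² ]^{-1} = ∫_0^τ ( ∫_0^τ (φ(s+τ)/φ(t+s))² dt )^{-1} ds. -/
/-!
Put `H s t = (φ (s + τ) / φ (t + s)) ^ 2`. The inner sum for section `k` is the right Riemann sum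
of `H (k τ / p)` over `[0, τ]`. Since `H` is uniformly continuous on compact sets, these Riemann
sums converge to `∫ t in 0..τ, H s t` uniformly in `s ∈ [0, τ]`. That limit is continuous and
positive, so the reciprocals converge uniformly as well. The outer sum is then a Riemann sum of
uniformly convergent integrands, and it converges to the integral of their limit.
-/

open Filter Finset MeasureTheory intervalIntegral

noncomputable def riemannSum (f : ℝ → ℝ) (τ : ℝ) (p : ℕ) : ℝ :=
  τ / p * ∑ i ∈ Icc 1 p, f (i * τ / p)

lemma riemannSum_eq_sum_range (f : ℝ → ℝ) (τ : ℝ) (p : ℕ) :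
    riemannSum f τ p = ∑ i ∈ range p, τ / p * f ((i + 1 : ℕ) * τ / p) := by
  rw [riemannSum, mul_sum, ← Ico_add_one_right_eq_Icc, sum_Ico_eq_sum_range, Nat.add_sub_cancel]
  simp only [add_comm 1]

lemma abs_riemannSum_sub_integral_le {f : ℝ → ℝ} {τ ε : ℝ} {p : ℕ} (hτ : 0 ≤ τ) (hp : p ≠ 0)
    (hf : ContinuousOn f (Set.Icc 0 τ))
    (hmod : ∀ t ∈ Set.Icc 0 τ, ∀ u ∈ Set.Icc 0 τ, |t - u| ≤ τ / p → |f t - f u| ≤ ε) :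
    |riemannSum f τ p - ∫ t in 0..τ, f t| ≤ ε * τ := by
  set x : ℕ → ℝ := fun i => i * τ / p with hx
  have hp' : (0 : ℝ) < p := by positivity
  have hstep : ∀ i, x (i + 1) - x i = τ / p := fun i => by simp only [hx]; push_cast; ring
  have hmesh : 0 ≤ τ / p := by positivity
  have hle : ∀ i, x i ≤ x (i + 1) := fun i => by linarith [hstep i]
  have hmem : ∀ i < p, Set.Icc (x i) (x (i + 1)) ⊆ Set.Icc 0 τ := by
    intro i hi
    have hi : (i : ℝ) + 1 ≤ p := by exact_mod_cast hi
    refine Set.Icc_subset_Icc (by positivity) ?_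
    rw [div_le_iff₀ hp']; push_cast; nlinarith
  have hint : ∀ i < p, IntervalIntegrable f volume (x i) (x (i + 1)) := fun i hi =>
    (hf.mono (by rw [Set.uIcc_of_le (hle i)]; exact hmem i hi)).intervalIntegrable
  have hsplit : ∫ t in 0..τ, f t = ∑ i ∈ range p, ∫ t in x i..x (i + 1), f t := by
    rw [sum_integral_adjacent_intervals hint]
    simp [hx, hp'.ne']
  have hlocal : ∀ i ∈ range p,
      |τ / p * f (x (i + 1)) - ∫ t in x i..x (i + 1), f t| ≤ ε * (τ / p) := by
    intro i hi
    calc |τ / p * f (x (i + 1)) - ∫ t in x i..x (i + 1), f t|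
        = ‖∫ t in x i..x (i + 1), (f (x (i + 1)) - f t)‖ := by
          rw [intervalIntegral.integral_sub intervalIntegrable_const (hint i (mem_range.mp hi)),
            intervalIntegral.integral_const, hstep, smul_eq_mul, Real.norm_eq_abs]
      _ ≤ ε * |x (i + 1) - x i| := by
          refine norm_integral_le_of_norm_le_const fun t ht => ?_
          rw [Set.uIoc_of_le (hle i)] at ht
          have hIcc := hmem i (mem_range.mp hi)
          refine hmod _ (hIcc ⟨hle i, le_rfl⟩) t (hIcc (Set.Ioc_subset_Icc_self ht)) ?_
          rw [abs_of_nonneg (by linarith [ht.2])]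
          linarith [ht.1, hstep i]
      _ = ε * (τ / p) := by rw [hstep, abs_of_nonneg hmesh]
  calc |riemannSum f τ p - ∫ t in 0..τ, f t|
      = |∑ i ∈ range p, (τ / p * f (x (i + 1)) - ∫ t in x i..x (i + 1), f t)| := by
        rw [riemannSum_eq_sum_range, hsplit, sum_sub_distrib]
    _ ≤ ∑ i ∈ range p, ε * (τ / p) := (abs_sum_le_sum_abs _ _).trans (sum_le_sum hlocal)
    _ = ε * τ := by rw [sum_const, card_range, nsmul_eq_mul]; field_simp

theorem tendstoUniformlyOn_riemannSum {H : ℝ → ℝ → ℝ} {K : Set ℝ} {τ : ℝ} (hK : IsCompact K)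
    (hτ : 0 ≤ τ) (hH : ContinuousOn (Function.uncurry H) (K ×ˢ Set.Icc 0 τ)) :
    TendstoUniformlyOn (fun p s => riemannSum (H s) τ p) (fun s => ∫ t in 0..τ, H s t)
      atTop K := by
  rw [Metric.tendstoUniformlyOn_iff]
  intro ε hε
  obtain ⟨δ, hδ, hmod⟩ := Metric.uniformContinuousOn_iff_le.mp
    ((hK.prod isCompact_Icc).uniformContinuousOn_of_continuous hH) (ε / (τ + 1)) (by positivity)
  have hmesh : ∀ᶠ p : ℕ in atTop, τ / p < δ :=
    (tendsto_const_div_atTop_nhds_zero_nat τ).eventually (gt_mem_nhds hδ)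
  filter_upwards [hmesh, eventually_ne_atTop 0] with p hpδ hp s hs
  have hHs : ContinuousOn (H s) (Set.Icc 0 τ) :=
    hH.comp (continuousOn_const.prodMk continuousOn_id) fun t ht => ⟨hs, ht⟩
  rw [dist_comm, Real.dist_eq]
  calc _ ≤ ε / (τ + 1) * τ :=
        abs_riemannSum_sub_integral_le hτ hp hHs fun t ht u hu htu =>
          hmod (s, t) ⟨hs, ht⟩ (s, u) ⟨hs, hu⟩
            (by simpa [Prod.dist_eq, Real.dist_eq] using htu.trans hpδ.le)
    _ < ε := by rw [div_mul_eq_mul_div, div_lt_iff₀ (by positivity)]; linarith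

lemma abs_riemannSum_sub_riemannSum_le {f g : ℝ → ℝ} {τ ε : ℝ} {p : ℕ} (hτ : 0 ≤ τ)
    (hp : p ≠ 0) (hfg : ∀ t ∈ Set.Icc 0 τ, |f t - g t| ≤ ε) :
    |riemannSum f τ p - riemannSum g τ p| ≤ ε * τ := by
  have hp' : (0 : ℝ) < p := by positivity
  rw [riemannSum, riemannSum, ← mul_sub, ← sum_sub_distrib, abs_mul,
    abs_of_nonneg (by positivity)]
  calc τ / p * |∑ i ∈ Icc 1 p, (f (i * τ / p) - g (i * τ / p))|
      ≤ τ / p * ∑ i ∈ Icc 1 p, ε := by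
        gcongr
        refine (abs_sum_le_sum_abs _ _).trans
          (sum_le_sum fun i hi => hfg _ ⟨by positivity, ?_⟩)
        have : (i : ℝ) ≤ p := by exact_mod_cast (mem_Icc.mp hi).2
        rw [div_le_iff₀ hp']
        nlinarith
    _ = ε * τ := by rw [sum_const, Nat.card_Icc, Nat.add_sub_cancel, nsmul_eq_mul]; field_simp

theorem tendsto_riemannSum_of_tendstoUniformlyOn {g : ℕ → ℝ → ℝ} {G : ℝ → ℝ} {τ : ℝ}
    (hτ : 0 ≤ τ) (hG : ContinuousOn G (Set.Icc 0 τ))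
    (hg : TendstoUniformlyOn g G atTop (Set.Icc 0 τ)) :
    Tendsto (fun p => riemannSum (g p) τ p) atTop (nhds (∫ t in 0..τ, G t)) := by
  have hG_sum : Tendsto (fun p => riemannSum G τ p) atTop (nhds (∫ t in 0..τ, G t)) :=
    (tendstoUniformlyOn_riemannSum (H := fun _ => G) isCompact_singleton hτ
      (hG.comp continuousOn_snd fun _ h => h.2)).tendsto_at (Set.mem_singleton 0)
  refine hG_sum.congr_dist (Metric.tendsto_nhds.mpr fun ε hε => ?_)
  filter_upwards [Metric.tendstoUniformlyOn_iff.mp hg (ε / (τ + 1)) (by positivity),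
    eventually_ne_atTop 0] with p hgp hp
  rw [Real.dist_0_eq_abs, abs_dist, dist_comm, Real.dist_eq]
  calc _ ≤ ε / (τ + 1) * τ := abs_riemannSum_sub_riemannSum_le hτ hp fun t ht => by
        simpa [Real.dist_eq, abs_sub_comm] using (hgp t ht).le
    _ < ε := by rw [div_mul_eq_mul_div, div_lt_iff₀ (by positivity)]; linarith

/-- **Continuum limit of the section-based Riemann sums.**
Let `τ > 0` and let `φ : ℝ → ℝ` be continuous and nowhere vanishing.  Then the
Riemann-type double sums over `p` equally spaced sections converge, as
`p → ∞`, to the corresponding double integral: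
`(τ/p) ∑_{k=1}^p [ (τ/p) ∑_{i=1}^p (φ(kτ/p + τ)/φ((i+k)τ/p))² ]⁻¹
   → ∫_0^τ ( ∫_0^τ (φ(s+τ)/φ(t+s))² dt )⁻¹ ds`. -/
theorem continuum_limit_of_section_sums
    (τ : ℝ) (hτ : 0 < τ) (φ : ℝ → ℝ)
    (hφc : Continuous φ) (hφ0 : ∀ t, φ t ≠ 0) :
    Tendsto
      (fun p : ℕ =>
        (τ / p) * ∑ k ∈ Finset.Icc 1 p,
          ((τ / p) * ∑ i ∈ Finset.Icc 1 p,
              (φ ((k : ℝ) * τ / p + τ) / φ (((i : ℝ) + (k : ℝ)) * τ / p)) ^ 2)⁻¹)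
      atTop
      (nhds (∫ s in (0:ℝ)..τ, (∫ t in (0:ℝ)..τ, (φ (s + τ) / φ (t + s)) ^ 2)⁻¹)) := by
  set H : ℝ → ℝ → ℝ := fun s t => (φ (s + τ) / φ (t + s)) ^ 2
  have hH_cont : Continuous (Function.uncurry H) := by
    fun_prop (disch := exact fun _ => hφ0 _)
  have hH_pos : ∀ s t, 0 < H s t := fun s t => sq_pos_of_ne_zero (div_ne_zero (hφ0 _) (hφ0 _))
  have hI_cont : Continuous fun s => ∫ t in 0..τ, H s t :=
    continuous_parametric_intervalIntegral_of_continuous' hH_cont 0 τ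
  have hI_pos : ∀ s, 0 < ∫ t in 0..τ, H s t := fun s =>
    intervalIntegral_pos_of_pos ((hH_cont.uncurry_left s).intervalIntegrable 0 τ) (hH_pos s) hτ
  have hinner := tendstoUniformlyOn_riemannSum (isCompact_Icc (a := 0) (b := τ)) hτ.le
    hH_cont.continuousOn
  have hinv := (tendstoLocallyUniformlyOn_iff_tendstoUniformlyOn_of_compact isCompact_Icc).mp
    (hinner.tendstoLocallyUniformlyOn.fun_inv₀ hI_cont.continuousOn fun s _ => (hI_pos s).ne')
  convert tendsto_riemannSum_of_tendstoUniformlyOn hτ.le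
    (hI_cont.fun_inv₀ fun s => (hI_pos s).ne').continuousOn hinv using 2 with p
  simp only [riemannSum, H, add_mul, add_div]
end
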